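/- Let n ≥ 1, let λ be a partition of n, and let c, d be functions from the cells of λ to ℕ. Suppose there exists a linear order ⪯ on ℕ × ℕ such that the filling of λ given by b ↦ (c(b), d(b)) is semistandard with respect to ⪯, i.e. weakly ⪯-increasing from left to right along each row and strictly ⪯-increasing from bottom to top along each column. Then for every standard Young tableau T ∈ SYT(λ), the coefficient of the monomial x_T^c y_T^d in F_T^{c,d} is nonzero; in particular F_T^{c,d} ≠ 0 in ℂ[𝐱,𝐲]. -/

import Mathlib

open MvPolynomial

noncomputable section

/-- The polynomial ring `ℂ[x₁,…,xₙ,y₁,…,yₙ]`; variable `Sum.inl i` is `xᵢ`,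
variable `Sum.inr i` is `yᵢ`. -/
abbrev PolyXY (n : ℕ) : Type := MvPolynomial (Fin n ⊕ Fin n) ℂ

/-- The diagonal action of `π ∈ Sₙ`: `π · f = f(x_{π(1)},…,x_{π(n)},y_{π(1)},…,y_{π(n)})`. -/
def diagAct {n : ℕ} (π : Equiv.Perm (Fin n)) (f : PolyXY n) : PolyXY n :=
  rename (Sum.map ⇑π ⇑π) f
/-- The cells of a Young diagram (French notation: a cell `(r, c)` lies in row `r`
counted from the bottom starting at `0`, and column `c` starting at `0`). -/
abbrev Cell (lam : YoungDiagram) : Type := {x // x ∈ lam.cells}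

/-- A bijective filling of the cells of `lam` with the `n` values (value `j : Fin n`
represents the entry `j+1`). -/
abbrev Tab (lam : YoungDiagram) (n : ℕ) : Type := Cell lam ≃ Fin n

def cellRow {lam : YoungDiagram} (b : Cell lam) : ℕ := b.1.1

def cellCol {lam : YoungDiagram} (b : Cell lam) : ℕ := b.1.2

/-- A filling is standard if entries increase left to right along rows and increase
up columns. -/
def IsSYT {lam : YoungDiagram} {n : ℕ} (T : Tab lam n) : Prop :=
  (∀ a b : Cell lam, cellRow a = cellRow b → cellCol a < cellCol b → T a < T b) ∧
  (∀ a b : Cell lam, cellCol a = cellCol b → cellRow a < cellRow b → T a < T b)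

/-- The row group `R(T)`: permutations sending each entry of `T` to an entry in the
same row. -/
def rowGroup {lam : YoungDiagram} {n : ℕ} (T : Tab lam n) : Finset (Equiv.Perm (Fin n)) :=
  Finset.univ.filter fun π => ∀ b : Cell lam, cellRow (T.symm (π (T b))) = cellRow b

/-- The column group `C(T)`: permutations sending each entry of `T` to an entry in the
same column. -/
def colGroup {lam : YoungDiagram} {n : ℕ} (T : Tab lam n) : Finset (Equiv.Perm (Fin n)) :=
  Finset.univ.filter fun π => ∀ b : Cell lam, cellCol (T.symm (π (T b))) = cellCol b

/-- The monomial `x_T^c y_T^d = ∏_{b ∈ λ} x_{T(b)}^{c(b)} y_{T(b)}^{d(b)}`. -/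
def tabMonomial {lam : YoungDiagram} {n : ℕ} (T : Tab lam n) (c d : Cell lam → ℕ) :
    PolyXY n :=
  ∏ b : Cell lam, (X (Sum.inl (T b)) ^ c b * X (Sum.inr (T b)) ^ d b)

/-- The higher Specht polynomial `F_T^{c,d} = ε_T(x_T^c y_T^d)`, where
`ε_T = Σ_{τ∈C(T)} Σ_{σ∈R(T)} sgn(τ)·τσ`. -/
def FTcd {lam : YoungDiagram} {n : ℕ} (T : Tab lam n) (c d : Cell lam → ℕ) : PolyXY n :=
  ∑ τ ∈ colGroup T, ∑ σ ∈ rowGroup T,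
    ((Equiv.Perm.sign τ : ℤ) : ℂ) • diagAct (τ * σ) (tabMonomial T c d)

/-!
The coefficient of `x_T^c y_T^d` in `F_T^{c,d}` counts the pairs `(τ, σ) ∈ C(T) × R(T)` for
which `τσ` fixes the monomial, with sign `sgn τ`. Transport `τ, σ` to permutations `t, s` of
the cells and replace each label `(c b, d b)` by its rank in the order `r`: the rank strictly
increases up every column, and `rank ∘ t ∘ s = rank`. If `t ≠ 1`, look at the highest row
containing a cell moved by `t`: there `t` can only move cells down their columns, so it
strictly lowers the rank sum of that row, whereas `s` merely permutes the row. Hence only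
`τ = 1` contributes, and the coefficient is the number of `σ ∈ R(T)` fixing the monomial,
which is positive since `σ = 1` does.
-/

open Finset

theorem card_filter_rel_ne_lt {γ : Type*} (r : γ → γ → Prop) [IsTrans γ r] [Std.Antisymm r]
    [DecidableEq γ] [DecidableRel r] (S : Finset γ) {u v : γ} (hu : u ∈ S) (huv : r u v)
    (hne : u ≠ v) : #{w ∈ S | r w u ∧ w ≠ u} < #{w ∈ S | r w v ∧ w ≠ v} := by
  refine card_lt_card ((ssubset_iff_of_subset fun w hw => ?_).mpr ⟨u, ?_, ?_⟩)
  · simp only [mem_filter] at hw ⊢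
    exact ⟨hw.1, _root_.trans hw.2.1 huv, fun h => hw.2.2 (antisymm hw.2.1 (h ▸ huv))⟩
  · simp [hu, huv, hne]
  · simp

theorem eq_one_of_weight_comp_mul_eq {β α : Type*} [Fintype β] [AddCommMonoid α]
    [PartialOrder α] [IsOrderedCancelAddMonoid α] (row col : β → ℕ) (m : β → α)
    (hcell : Function.Injective fun x => (row x, col x))
    (hm : ∀ x y, col x = col y → row x < row y → m x < m y)
    {t s : Equiv.Perm β} (ht : ∀ x, col (t x) = col x) (hs : ∀ x, row (s x) = row x)
    (hts : ∀ x, m (t (s x)) = m x) : t = 1 := by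
  classical
  by_contra hne
  obtain ⟨x₀, hx₀, hmax⟩ := exists_max_image {x | t x ≠ x} row
    (filter_nonempty_iff.mpr (by simpa [Equiv.ext_iff] using hne))
  have hdecr : ∀ x, row x = row x₀ → t x ≠ x → m (t x) < m x := by
    intro x hx htx
    have hle : row (t x) ≤ row x₀ := hmax _ (by simpa using fun h => htx (t.injective h))
    have hrow_ne : row (t x) ≠ row x := fun h => htx (hcell (Prod.ext h (ht x)))
    exact hm _ _ (ht x) (by omega)
  have hsum : ∑ x ∈ {x | row x = row x₀}, m (t x) = ∑ x ∈ {x | row x = row x₀}, m x :=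
    calc _ = ∑ x ∈ {x | row x = row x₀}, m (t (s x)) :=
          (sum_equiv s (by simp [hs]) fun _ _ => rfl).symm
      _ = _ := sum_congr rfl fun x _ => hts x
  refine (sum_lt_sum (fun x hx => ?_) ⟨x₀, by simp, hdecr x₀ rfl (by simpa using hx₀)⟩).ne
    hsum
  by_cases htx : t x = x
  · rw [htx]
  · exact (hdecr x (by simpa using hx) htx).le

theorem Finsupp.equivMapDomain_eq_self_iff {ι M : Type*} [Zero M] (e : Equiv.Perm ι)
    (f : ι →₀ M) : f.equivMapDomain e = f ↔ ∀ i, f (e i) = f i := by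
  refine ⟨fun h i => ?_, fun h => Finsupp.ext fun i => ?_⟩
  · simpa using (DFunLike.congr_fun h (e i)).symm
  · simpa using (h (e.symm i)).symm

section Specht

variable {lam : YoungDiagram} {n : ℕ}

def tabExponent (T : Tab lam n) (c d : Cell lam → ℕ) : (Fin n ⊕ Fin n) →₀ ℕ :=
  Finsupp.equivFunOnFinite.symm (Sum.elim (fun j => c (T.symm j)) (fun j => d (T.symm j)))

theorem tabMonomial_eq_monomial (T : Tab lam n) (c d : Cell lam → ℕ) :
    tabMonomial T c d = monomial (tabExponent T c d) 1 := by
  rw [monomial_eq, C_1, one_mul, Finsupp.prod_fintype _ _ (by simp), Fintype.prod_sum_type,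
    ← prod_mul_distrib, tabMonomial]
  exact Fintype.prod_equiv T _ _ fun b => by simp [tabExponent]

theorem coeff_diagAct_tabMonomial (T : Tab lam n) (c d : Cell lam → ℕ)
    (π : Equiv.Perm (Fin n)) :
    coeff (tabExponent T c d) (diagAct π (tabMonomial T c d)) =
      if ∀ j, (c (T.symm (π j)), d (T.symm (π j))) = (c (T.symm j), d (T.symm j)) then 1
      else 0 := by
  rw [tabMonomial_eq_monomial, diagAct, rename_monomial, coeff_monomial]
  refine if_congr ?_ rfl rfl
  change Finsupp.mapDomain (Equiv.sumCongr π π) _ = _ ↔ _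
  rw [← Finsupp.equivMapDomain_eq_mapDomain (Equiv.sumCongr π π),
    Finsupp.equivMapDomain_eq_self_iff, Sum.forall]
  simp [tabExponent, forall_and]

theorem one_mem_colGroup (T : Tab lam n) : 1 ∈ colGroup T := by
  simp [colGroup]

theorem one_mem_rowGroup (T : Tab lam n) : 1 ∈ rowGroup T := by
  simp [rowGroup]

theorem eq_one_of_mem_colGroup_of_mem_rowGroup {c d : Cell lam → ℕ}
    (r : ℕ × ℕ → ℕ × ℕ → Prop) [IsTrans (ℕ × ℕ) r] [Std.Antisymm r]
    (hcol : ∀ a b : Cell lam, cellCol a = cellCol b → cellRow a < cellRow b →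
      r (c a, d a) (c b, d b) ∧ (c a, d a) ≠ (c b, d b))
    {T : Tab lam n} {τ σ : Equiv.Perm (Fin n)} (hτ : τ ∈ colGroup T) (hσ : σ ∈ rowGroup T)
    (hfix : ∀ j, (c (T.symm ((τ * σ) j)), d (T.symm ((τ * σ) j))) =
      (c (T.symm j), d (T.symm j))) : τ = 1 := by
  classical
  let L (b : Cell lam) : ℕ × ℕ := (c b, d b)
  let rank (v : ℕ × ℕ) : ℕ := #{w ∈ univ.image L | r w v ∧ w ≠ v}
  have ht := eq_one_of_weight_comp_mul_eq cellRow cellCol (rank ∘ L) (fun x y h => Subtype.ext h)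
    (fun x y hxy hrow => card_filter_rel_ne_lt r _ (mem_image_of_mem L (mem_univ x))
      (hcol x y hxy hrow).1 (hcol x y hxy hrow).2)
    (t := T.symm.permCongr τ) (s := T.symm.permCongr σ) (mem_filter.mp hτ).2
    (mem_filter.mp hσ).2 fun x => congrArg rank
      (show L (T.symm.permCongr τ (T.symm.permCongr σ x)) = L x by simpa [L] using hfix (T x))
  exact T.symm.permCongr.injective (ht.trans (T.symm.permCongr_refl).symm)

theorem coeff_FTcd_eq_card {c d : Cell lam → ℕ}
    (r : ℕ × ℕ → ℕ × ℕ → Prop) [IsTrans (ℕ × ℕ) r] [Std.Antisymm r]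
    (hcol : ∀ a b : Cell lam, cellCol a = cellCol b → cellRow a < cellRow b →
      r (c a, d a) (c b, d b) ∧ (c a, d a) ≠ (c b, d b)) (T : Tab lam n) :
    coeff (tabExponent T c d) (FTcd T c d) =
      #{σ ∈ rowGroup T | ∀ j, (c (T.symm (σ j)), d (T.symm (σ j))) =
        (c (T.symm j), d (T.symm j))} := by
  simp only [FTcd, coeff_sum, coeff_smul, coeff_diagAct_tabMonomial]
  rw [sum_eq_single_of_mem 1 (one_mem_colGroup T)]
  · simp [sum_boole]
  · intro τ hτ hne
    refine sum_eq_zero fun σ hσ => ?_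
    rw [if_neg fun h => hne (eq_one_of_mem_colGroup_of_mem_rowGroup r hcol hτ hσ h), smul_zero]

end Specht

theorem stmt8_general (n : ℕ)
    (lam : YoungDiagram)
    (c d : Cell lam → ℕ)
    (r : ℕ × ℕ → ℕ × ℕ → Prop) (hr : IsLinearOrder (ℕ × ℕ) r)
    (hcol : ∀ a b : Cell lam, cellCol a = cellCol b → cellRow a < cellRow b →
      r (c a, d a) (c b, d b) ∧ (c a, d a) ≠ (c b, d b))
    (T : Tab lam n) :
    MvPolynomial.coeff
      (Finsupp.equivFunOnFinite.symm
        (Sum.elim (fun j : Fin n => c (T.symm j)) (fun j : Fin n => d (T.symm j))))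
      (FTcd T c d) ≠ 0 ∧
    FTcd T c d ≠ 0 := by
  have hcoeff : coeff (tabExponent T c d) (FTcd T c d) ≠ 0 := by
    rw [coeff_FTcd_eq_card r hcol T, Nat.cast_ne_zero, ← pos_iff_ne_zero, card_pos]
    exact ⟨1, by simp [one_mem_rowGroup]⟩
  exact ⟨hcoeff, ne_zero_iff.mpr ⟨_, hcoeff⟩⟩

/-- If there is a linear order `r` on `ℕ × ℕ` for which the filling
`b ↦ (c(b), d(b))` of `λ` is semistandard (weakly `r`-increasing along rows, strictly
`r`-increasing up columns), then for every `T ∈ SYT(λ)` the coefficient of the monomial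
`x_T^c y_T^d` in `F_T^{c,d}` is nonzero; in particular `F_T^{c,d} ≠ 0`. -/
theorem stmt8 (n : ℕ) (hn : 1 ≤ n)
    (lam : YoungDiagram) (hlam : lam.card = n)
    (c d : Cell lam → ℕ)
    (r : ℕ × ℕ → ℕ × ℕ → Prop) (hr : IsLinearOrder (ℕ × ℕ) r)
    (hrow : ∀ a b : Cell lam, cellRow a = cellRow b → cellCol a ≤ cellCol b →
      r (c a, d a) (c b, d b))
    (hcol : ∀ a b : Cell lam, cellCol a = cellCol b → cellRow a < cellRow b →
      r (c a, d a) (c b, d b) ∧ (c a, d a) ≠ (c b, d b))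
    (T : Tab lam n) (hT : IsSYT T) :
    MvPolynomial.coeff
      (Finsupp.equivFunOnFinite.symm
        (Sum.elim (fun j : Fin n => c (T.symm j)) (fun j : Fin n => d (T.symm j))))
      (FTcd T c d) ≠ 0 ∧
    FTcd T c d ≠ 0 :=
  stmt8_general n lam c d r hr hcol T
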